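/- arXiv:math/0609193 — 2 statements merged into one kernel-verified Lean document; each statement's English description precedes it below -/
import Mathlib

section
/- Let d ≥ 1, λ > 0, and let X_1, X_2, … be i.i.d. random vectors in ℝ^d whose coordinates are independent and each exponentially distributed with rate λ. Let {y_n} be a sequence of positive edge distances with n·y_n^d / log n → c ∈ (0,∞). Let δ_n(y_n) be the minimum vertex degree of the random geometric graph G_n(y_n). Then almost surely, limsup_{n→∞} δ_n(y_n)/(n·y_n^d) ≤ λ^d. -/
/-!
Far out in the corner of the exponential distribution the sample is so sparse that, eventually
almost surely, some vertex has degree at most one; as `n y_n^d → ∞`, this already forces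
`δ_n(y_n) / (n y_n^d) → 0`. Take the box `(t_n, ∞)^d` of probability `p_n = 2 log n / n`. It
misses all of `X_1, …, X_n` with probability `(1 - p_n)^n ≤ n^{-2}`. The `Exp(λ)^d`-mass of a
`y_n`-ball centred in the box is `O(y_n^d p_n)`, so some point of the box has two neighbours with
probability `O(n^3 p_n^3 y_n^{2d}) = O((log n)^5 / n^2)`. Both bounds are summable, and
Borel–Cantelli concludes.
-/

open MeasureTheory ProbabilityTheory Real Filter

/-- The degree of the vertex `X i` in the random geometric graph `G_n(y)` on vertices
`X 0, …, X (n-1)` (with the `l_∞` norm on `Fin d → ℝ`, which is the sup norm of the pi type). -/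
noncomputable def rggDeg {d : ℕ} {Ω : Type*} (X : ℕ → Ω → (Fin d → ℝ))
    (y : ℝ) (n i : ℕ) (ω : Ω) : ℕ :=
  Nat.card {j : ℕ // j < n ∧ j ≠ i ∧ ‖X i ω - X j ω‖ ≤ y}

/-- The minimum vertex degree `δ_n(y)` of the random geometric graph `G_n(y)`. -/
noncomputable def rggMinDeg {d : ℕ} {Ω : Type*} (X : ℕ → Ω → (Fin d → ℝ))
    (y : ℝ) (n : ℕ) (ω : Ω) : ℕ :=
  sInf ((fun i => rggDeg X y n i ω) '' Set.Iio n)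

/-- The maximum vertex degree `Δ_n(y)` of the random geometric graph `G_n(y)`. -/
noncomputable def rggMaxDeg {d : ℕ} {Ω : Type*} (X : ℕ → Ω → (Fin d → ℝ))
    (y : ℝ) (n : ℕ) (ω : Ω) : ℕ :=
  sSup ((fun i => rggDeg X y n i ω) '' Set.Iio n)

/-- The number of edges `ε_n(y)` of the random geometric graph `G_n(y)`. -/
noncomputable def rggEdgeCount {d : ℕ} {Ω : Type*} (X : ℕ → Ω → (Fin d → ℝ))
    (y : ℝ) (n : ℕ) (ω : Ω) : ℕ :=
  Nat.card {p : ℕ × ℕ // p.1 < p.2 ∧ p.2 < n ∧ ‖X p.1 ω - X p.2 ω‖ ≤ y}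

open Set Metric Asymptotics
open scoped ENNReal Topology

lemma expMeasure_Ioi {l : ℝ} (hl : 0 < l) {t : ℝ} (ht : 0 ≤ t) :
    expMeasure l (Ioi t) = ENNReal.ofReal (exp (-(l * t))) := by
  have := isProbabilityMeasure_expMeasure hl
  have hIic : expMeasure l (Iic t) = ENNReal.ofReal (1 - exp (-(l * t))) := by
    rw [expMeasure, gammaMeasure, withDensity_apply _ measurableSet_Iic]
    exact (lintegral_exponentialPDF_eq_antiDeriv hl t).trans (by rw [if_pos ht])
  rw [← compl_Iic, prob_compl_eq_one_sub measurableSet_Iic, hIic, ← ENNReal.ofReal_one,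
    ← ENNReal.ofReal_sub _ (sub_nonneg.2 (exp_le_one_iff.2 (neg_nonpos.2 (by positivity)))),
    sub_sub_cancel]

lemma exponentialPDF_le {l : ℝ} (hl : 0 ≤ l) {a x : ℝ} (hx : a ≤ x) :
    exponentialPDF l x ≤ ENNReal.ofReal (l * exp (-(l * a))) := by
  rcases lt_or_ge x 0 with hx0 | hx0
  · simp [exponentialPDF_of_neg hx0]
  · rw [exponentialPDF_of_nonneg hx0]
    gcongr

lemma expMeasure_Icc_le {l : ℝ} (hl : 0 ≤ l) (a b : ℝ) :
    expMeasure l (Icc a b) ≤ ENNReal.ofReal (l * exp (-(l * a)) * (b - a)) := by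
  rw [expMeasure, gammaMeasure, withDensity_apply _ measurableSet_Icc]
  calc ∫⁻ x in Icc a b, gammaPDF 1 l x
      ≤ ∫⁻ _ in Icc a b, ENNReal.ofReal (l * exp (-(l * a))) :=
        setLIntegral_mono measurable_const fun x hx => exponentialPDF_le hl hx.1
    _ = _ := by
        rw [setLIntegral_const, Real.volume_Icc, ← ENNReal.ofReal_mul (by positivity)]

lemma pi_expMeasure_pi_Ioi {d : ℕ} {l : ℝ} (hl : 0 < l) {t : ℝ} (ht : 0 ≤ t) :
    Measure.pi (fun _ : Fin d => expMeasure l) (univ.pi fun _ => Ioi t)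
      = ENNReal.ofReal (exp (-(l * t)) ^ d) := by
  have := isProbabilityMeasure_expMeasure hl
  rw [Measure.pi_pi, Finset.prod_const, Finset.card_univ, Fintype.card_fin, expMeasure_Ioi hl ht,
    ENNReal.ofReal_pow (exp_nonneg _)]

lemma pi_expMeasure_closedBall_le {d : ℕ} {l : ℝ} (hl : 0 < l) {t y : ℝ} (hy : 0 ≤ y)
    {a : Fin d → ℝ} (ha : ∀ r, t ≤ a r) :
    Measure.pi (fun _ : Fin d => expMeasure l) (closedBall a y)
      ≤ ENNReal.ofReal ((2 * l * y * exp (l * (y - t))) ^ d) := by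
  have := isProbabilityMeasure_expMeasure hl
  rw [closedBall_pi a hy, Measure.pi_pi, ENNReal.ofReal_pow (by positivity)]
  refine (Finset.prod_le_pow_card _ _ _ fun r _ => ?_).trans_eq (by rw [Finset.card_fin])
  rw [Real.closedBall_eq_Icc]
  refine (expMeasure_Icc_le hl.le _ _).trans (ENNReal.ofReal_le_ofReal ?_)
  have : exp (-(l * (a r - y))) ≤ exp (l * (y - t)) := by
    gcongr; nlinarith [ha r]
  calc l * exp (-(l * (a r - y))) * (a r + y - (a r - y))
      ≤ l * exp (l * (y - t)) * (2 * y) := by gcongr <;> linarith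
    _ = 2 * l * y * exp (l * (y - t)) := by ring

section IIDSample

variable {Ω E : Type*} [MeasureSpace Ω] [MeasurableSpace E] {μ : Measure E} {X : ℕ → Ω → E}

lemma measure_forall_lt_notMem_eq (hXm : ∀ i, Measurable (X i)) (hindep : iIndepFun X ℙ)
    (hdist : ∀ i, Measure.map (X i) ℙ = μ) {T : Set E} (hT : MeasurableSet T) (n : ℕ) :
    ℙ {ω | ∀ i < n, X i ω ∉ T} = μ Tᶜ ^ n := by
  have hset : {ω | ∀ i < n, X i ω ∉ T} = ⋂ i ∈ Finset.range n, X i ⁻¹' Tᶜ := by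
    ext; simp
  rw [hset, hindep.measure_inter_preimage_eq_mul _ fun _ _ => hT.compl]
  simp_rw [← Measure.map_apply (hXm _) hT.compl, hdist]
  rw [Finset.prod_const, Finset.card_range]

lemma measure_mem_with_two_neighbors_le [IsProbabilityMeasure (ℙ : Measure Ω)]
    [SeminormedAddCommGroup E] [OpensMeasurableSpace E]
    [SecondCountableTopology E] (hXm : ∀ i, Measurable (X i)) (hindep : iIndepFun X ℙ)
    (hdist : ∀ i, Measure.map (X i) ℙ = μ) {i j k : ℕ} (hij : i ≠ j) (hik : i ≠ k) (hjk : j ≠ k)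
    {T : Set E} (hT : MeasurableSet T) {y : ℝ} {q : ℝ≥0∞}
    (hq : ∀ a ∈ T, μ (closedBall a y) ≤ q) :
    ℙ {ω | X i ω ∈ T ∧ ‖X i ω - X j ω‖ ≤ y ∧ ‖X i ω - X k ω‖ ≤ y} ≤ μ T * q ^ 2 := by
  have hμ : IsProbabilityMeasure μ :=
    hdist 0 ▸ Measure.isProbabilityMeasure_map (hXm 0).aemeasurable
  have hjk_law : Measure.map (fun ω => (X j ω, X k ω)) ℙ = μ.prod μ := by
    rw [(indepFun_iff_map_prod_eq_prod_map_map (hXm j).aemeasurable (hXm k).aemeasurable).mp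
      (hindep.indepFun hjk), hdist, hdist]
  have hijk_law : Measure.map (fun ω => (X i ω, (X j ω, X k ω))) ℙ = μ.prod (μ.prod μ) := by
    rw [(indepFun_iff_map_prod_eq_prod_map_map (hXm i).aemeasurable
      ((hXm j).prodMk (hXm k)).aemeasurable).mp
      (hindep.indepFun_prodMk hXm j k i hij.symm hik.symm).symm, hdist, hjk_law]
  set S : Set (E × E × E) := {v | v.1 ∈ T ∧ v.2.1 ∈ closedBall v.1 y ∧ v.2.2 ∈ closedBall v.1 y}
  have hS : MeasurableSet S :=
    (measurable_fst hT).inter <|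
      (measurableSet_le (by fun_prop) measurable_const).inter
        (measurableSet_le (by fun_prop) measurable_const)
  have hslice : ∀ a, (μ.prod μ) (Prod.mk a ⁻¹' S)
      = T.indicator (fun a => μ (closedBall a y) ^ 2) a := by
    intro a
    by_cases ha : a ∈ T
    · have : Prod.mk a ⁻¹' S = closedBall a y ×ˢ closedBall a y := by ext; simp [S, ha]
      rw [this, Measure.prod_prod, indicator_of_mem ha, sq]
    · have : Prod.mk a ⁻¹' S = ∅ := by ext; simp [S, ha]
      rw [this, indicator_of_notMem ha, measure_empty]
  have hevent : {ω | X i ω ∈ T ∧ ‖X i ω - X j ω‖ ≤ y ∧ ‖X i ω - X k ω‖ ≤ y}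
      = (fun ω => (X i ω, (X j ω, X k ω))) ⁻¹' S := by
    ext; simp [S, dist_eq_norm, norm_sub_rev (X i _)]
  rw [hevent, ← Measure.map_apply ((hXm i).prodMk ((hXm j).prodMk (hXm k))) hS, hijk_law,
    Measure.prod_apply hS]
  simp_rw [hslice]
  rw [lintegral_indicator hT, mul_comm]
  exact (setLIntegral_mono measurable_const fun a ha => pow_le_pow_left' (hq a ha) 2).trans_eq
    (setLIntegral_const _ _)

end IIDSample

section Degree

variable {d : ℕ} {Ω : Type*} {X : ℕ → Ω → Fin d → ℝ} {y : ℝ} {n i : ℕ} {ω : Ω}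

lemma rggMinDeg_le_rggDeg (hi : i < n) : rggMinDeg X y n ω ≤ rggDeg X y n i ω :=
  Nat.sInf_le ⟨i, hi, rfl⟩

lemma exists_two_neighbors_of_two_le_rggDeg (h : 2 ≤ rggDeg X y n i ω) :
    ∃ j < n, ∃ k < n, i ≠ j ∧ i ≠ k ∧ j ≠ k ∧ ‖X i ω - X j ω‖ ≤ y ∧ ‖X i ω - X k ω‖ ≤ y := by
  have : Finite {j : ℕ // j < n ∧ j ≠ i ∧ ‖X i ω - X j ω‖ ≤ y} :=
    Nat.finite_of_card_ne_zero (by unfold rggDeg at h; omega)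
  obtain ⟨⟨j, hjn, hji, hj⟩, ⟨k, hkn, hki, hk⟩, hjk⟩ :=
    Finite.one_lt_card_iff_nontrivial.mp h
  exact ⟨j, hjn, k, hkn, hji.symm, hki.symm, fun h => hjk (by simp [h]), hj, hk⟩

variable [MeasureSpace Ω] [IsProbabilityMeasure (ℙ : Measure Ω)] {μ : Measure (Fin d → ℝ)}

lemma measure_exists_mem_two_le_rggDeg_le (hXm : ∀ i, Measurable (X i)) (hindep : iIndepFun X ℙ)
    (hdist : ∀ i, Measure.map (X i) ℙ = μ) {T : Set (Fin d → ℝ)} (hT : MeasurableSet T)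
    {q : ℝ≥0∞} (hq : ∀ a ∈ T, μ (closedBall a y) ≤ q) (n : ℕ) :
    ℙ {ω | ∃ i < n, X i ω ∈ T ∧ 2 ≤ rggDeg X y n i ω} ≤ n ^ 3 * (μ T * q ^ 2) := by
  classical
  set triples := (Finset.range n ×ˢ Finset.range n ×ˢ Finset.range n).filter
    fun v : ℕ × ℕ × ℕ => v.1 ≠ v.2.1 ∧ v.1 ≠ v.2.2 ∧ v.2.1 ≠ v.2.2
  have hcover : {ω | ∃ i < n, X i ω ∈ T ∧ 2 ≤ rggDeg X y n i ω} ⊆ ⋃ v ∈ triples,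
      {ω | X v.1 ω ∈ T ∧ ‖X v.1 ω - X v.2.1 ω‖ ≤ y ∧ ‖X v.1 ω - X v.2.2 ω‖ ≤ y} := by
    rintro ω ⟨i, hin, hiT, hdeg⟩
    obtain ⟨j, hjn, k, hkn, hij, hik, hjk, hj, hk⟩ := exists_two_neighbors_of_two_le_rggDeg hdeg
    exact mem_biUnion (x := (i, j, k)) (by simp [triples, *]) ⟨hiT, hj, hk⟩
  have hcard : (triples.card : ℝ≥0∞) ≤ n ^ 3 := by
    have := Finset.card_filter_le (Finset.range n ×ˢ Finset.range n ×ˢ Finset.range n)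
      fun v : ℕ × ℕ × ℕ => v.1 ≠ v.2.1 ∧ v.1 ≠ v.2.2 ∧ v.2.1 ≠ v.2.2
    simp only [Finset.card_product, Finset.card_range] at this
    exact_mod_cast this.trans_eq (by ring)
  calc ℙ {ω | ∃ i < n, X i ω ∈ T ∧ 2 ≤ rggDeg X y n i ω}
      ≤ ∑ v ∈ triples,
          ℙ {ω | X v.1 ω ∈ T ∧ ‖X v.1 ω - X v.2.1 ω‖ ≤ y ∧ ‖X v.1 ω - X v.2.2 ω‖ ≤ y} :=
        (measure_mono hcover).trans (measure_biUnion_finset_le _ _)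
    _ ≤ ∑ _v ∈ triples, μ T * q ^ 2 := by
        gcongr with v hv
        simp only [triples, Finset.mem_filter] at hv
        exact measure_mem_with_two_neighbors_le hXm hindep hdist hv.2.1 hv.2.2.1 hv.2.2.2 hT hq
    _ ≤ n ^ 3 * (μ T * q ^ 2) := by
        rw [Finset.sum_const, nsmul_eq_mul]
        gcongr

end Degree

lemma ae_eventually_notMem_of_le_summable {α : Type*} [MeasurableSpace α] {μ : Measure α}
    [IsFiniteMeasure μ] {s : ℕ → Set α} {f : ℕ → ℝ} (hf0 : ∀ n, 0 ≤ f n) (hf : Summable f)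
    (hs : ∀ᶠ n in atTop, μ (s n) ≤ ENNReal.ofReal (f n)) :
    ∀ᵐ x ∂μ, ∀ᶠ n in atTop, x ∉ s n := by
  have hsum : Summable fun n => μ.real (s n) :=
    hf.of_norm_bounded_eventually_nat <| hs.mono fun n hn => by
      rw [Real.norm_of_nonneg measureReal_nonneg]
      exact ENNReal.toReal_le_of_le_ofReal (hf0 n) hn
  refine ae_eventually_notMem (ne_of_eq_of_ne ?_ (ENNReal.ofReal_ne_top (r := ∑' n, μ.real (s n))))
  rw [ENNReal.ofReal_tsum_of_nonneg (fun _ => measureReal_nonneg) hsum]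
  simp [measureReal_def]

lemma summable_log_pow_div_sq (k : ℕ) : Summable fun n : ℕ => log n ^ k / (n : ℝ) ^ 2 := by
  have h : (fun x : ℝ => log x ^ k / x ^ 2) =O[atTop] fun x => x ^ (-(3 / 2) : ℝ) := by
    refine ((isLittleO_log_rpow_rpow_atTop k (by norm_num : (0 : ℝ) < 1 / 2)).isBigO.mul
      (isBigO_refl (fun x : ℝ => (x ^ 2)⁻¹) atTop)).congr' ?_ ?_
    · filter_upwards with x
      rw [rpow_natCast, div_eq_mul_inv]
    · filter_upwards [eventually_gt_atTop 0] with x hx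
      rw [← rpow_natCast, ← rpow_neg hx.le, ← rpow_add hx]
      norm_num
  exact summable_of_isBigO_nat (summable_nat_rpow.mpr (by norm_num))
    (h.comp_tendsto tendsto_natCast_atTop_atTop)

lemma exp_log_div_pow {p : ℝ} (hp : 0 < p) {d : ℕ} (hd : d ≠ 0) : exp (log p / d) ^ d = p := by
  rw [← exp_nat_mul, mul_div_cancel₀ _ (Nat.cast_ne_zero.mpr hd), exp_log hp]

lemma tendsto_log_natCast_atTop : Tendsto (fun n : ℕ => log n) atTop atTop :=
  tendsto_log_atTop.comp tendsto_natCast_atTop_atTop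

lemma tendsto_log_div_self_nat : Tendsto (fun n : ℕ => log n / n) atTop (𝓝 0) :=
  isLittleO_log_id_atTop.tendsto_div_nhds_zero.comp tendsto_natCast_atTop_atTop

lemma eventually_two_mul_log_div_self_mem_Ioc :
    ∀ᶠ n : ℕ in atTop, 2 * (log n / n) ∈ Ioc 0 1 := by
  have h2 : Tendsto (fun n : ℕ => 2 * (log n / n)) atTop (𝓝 0) := by
    simpa using tendsto_log_div_self_nat.const_mul 2
  filter_upwards [tendsto_log_natCast_atTop.eventually_gt_atTop 0, eventually_gt_atTop 0,
    h2.eventually (eventually_le_nhds one_pos)] with n hlog hn h1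
  exact ⟨by positivity, h1⟩

-- `-log p / (l d)` is the threshold at which the box has `Exp(l)^d`-mass `p`.
def cornerBox (l : ℝ) (d : ℕ) (p : ℝ) : Set (Fin d → ℝ) :=
  univ.pi fun _ => Ioi (-log p / (l * d))

section CornerBox

variable {d : ℕ} {l p : ℝ}

lemma measurableSet_cornerBox : MeasurableSet (cornerBox l d p) :=
  MeasurableSet.univ_pi fun _ => measurableSet_Ioi

lemma exp_neg_mul_cornerBox_threshold (hl : l ≠ 0) (hd : d ≠ 0) :
    exp (-(l * (-log p / (l * d)))) = exp (log p / d) := by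
  congr 1
  field_simp

lemma pi_expMeasure_cornerBox (hl : 0 < l) (hd : d ≠ 0) (hp0 : 0 < p) (hp1 : p ≤ 1) :
    Measure.pi (fun _ : Fin d => expMeasure l) (cornerBox l d p) = ENNReal.ofReal p := by
  have ht : 0 ≤ -log p / (l * d) :=
    div_nonneg (neg_nonneg.2 (log_nonpos hp0.le hp1)) (by positivity)
  rw [cornerBox, pi_expMeasure_pi_Ioi hl ht, exp_neg_mul_cornerBox_threshold hl.ne' hd,
    exp_log_div_pow hp0 hd]

lemma pi_expMeasure_closedBall_le_of_mem_cornerBox (hl : 0 < l) (hd : d ≠ 0) (hp0 : 0 < p)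
    {y : ℝ} (hy : 0 ≤ y) {a : Fin d → ℝ} (ha : a ∈ cornerBox l d p) :
    Measure.pi (fun _ : Fin d => expMeasure l) (closedBall a y)
      ≤ ENNReal.ofReal ((2 * l * y * exp (l * y)) ^ d * p) := by
  refine (pi_expMeasure_closedBall_le hl hy fun r => (ha r (mem_univ r)).le).trans_eq ?_
  rw [mul_sub, sub_eq_add_neg, exp_add, exp_neg_mul_cornerBox_threshold hl.ne' hd, ← mul_assoc,
    mul_pow, exp_log_div_pow hp0 hd]

variable {Ω : Type*} [MeasureSpace Ω] {X : ℕ → Ω → Fin d → ℝ}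

lemma measure_forall_notMem_cornerBox (hl : 0 < l) (hd : d ≠ 0) (hXm : ∀ i, Measurable (X i))
    (hindep : iIndepFun X ℙ)
    (hdist : ∀ i, Measure.map (X i) ℙ = Measure.pi fun _ : Fin d => expMeasure l)
    (hp0 : 0 < p) (hp1 : p ≤ 1) (n : ℕ) :
    ℙ {ω | ∀ i < n, X i ω ∉ cornerBox l d p} = ENNReal.ofReal ((1 - p) ^ n) := by
  have := isProbabilityMeasure_expMeasure hl
  rw [measure_forall_lt_notMem_eq hXm hindep hdist measurableSet_cornerBox,
    prob_compl_eq_one_sub measurableSet_cornerBox, pi_expMeasure_cornerBox hl hd hp0 hp1,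
    ← ENNReal.ofReal_one, ← ENNReal.ofReal_sub _ hp0.le, ENNReal.ofReal_pow (sub_nonneg.2 hp1)]

lemma measure_exists_mem_cornerBox_two_le_rggDeg_le [IsProbabilityMeasure (ℙ : Measure Ω)]
    (hl : 0 < l) (hd : d ≠ 0) (hXm : ∀ i, Measurable (X i)) (hindep : iIndepFun X ℙ)
    (hdist : ∀ i, Measure.map (X i) ℙ = Measure.pi fun _ : Fin d => expMeasure l)
    (hp0 : 0 < p) (hp1 : p ≤ 1) {y : ℝ} (hy : 0 ≤ y) (n : ℕ) :
    ℙ {ω | ∃ i < n, X i ω ∈ cornerBox l d p ∧ 2 ≤ rggDeg X y n i ω}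
      ≤ ENNReal.ofReal ((n * p) ^ 3 * ((2 * l * y * exp (l * y)) ^ d) ^ 2) := by
  refine (measure_exists_mem_two_le_rggDeg_le hXm hindep hdist measurableSet_cornerBox
    (fun a ha => pi_expMeasure_closedBall_le_of_mem_cornerBox hl hd hp0 hy ha) n).trans_eq ?_
  rw [pi_expMeasure_cornerBox hl hd hp0 hp1, ← ENNReal.ofReal_natCast,
    ← ENNReal.ofReal_pow (Nat.cast_nonneg n), ← ENNReal.ofReal_pow (by positivity),
    ← ENNReal.ofReal_mul hp0.le, ← ENNReal.ofReal_mul (by positivity)]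
  ring_nf

lemma eventually_measure_forall_notMem_cornerBox_le (hl : 0 < l) (hd : d ≠ 0)
    (hXm : ∀ i, Measurable (X i)) (hindep : iIndepFun X ℙ)
    (hdist : ∀ i, Measure.map (X i) ℙ = Measure.pi fun _ : Fin d => expMeasure l) :
    ∀ᶠ n : ℕ in atTop, ℙ {ω | ∀ i < n, X i ω ∉ cornerBox l d (2 * (log n / n))}
      ≤ ENNReal.ofReal ((n : ℝ) ^ (-2 : ℝ)) := by
  filter_upwards [eventually_two_mul_log_div_self_mem_Ioc, eventually_gt_atTop 0]
    with n ⟨hp0, hp1⟩ hn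
  rw [measure_forall_notMem_cornerBox hl hd hXm hindep hdist hp0 hp1]
  refine ENNReal.ofReal_le_ofReal ?_
  have h2log : 2 * log n ≤ n := by
    rwa [← mul_div_assoc, div_le_one (by positivity)] at hp1
  calc (1 - 2 * (log n / n)) ^ n = (1 - 2 * log n / n) ^ n := by rw [mul_div_assoc]
    _ ≤ exp (-(2 * log n)) := one_sub_div_pow_le_exp_neg h2log
    _ = (n : ℝ) ^ (-2 : ℝ) := by rw [rpow_def_of_pos (by positivity)]; ring_nf

lemma eventually_measure_exists_mem_cornerBox_two_le_rggDeg_le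
    [IsProbabilityMeasure (ℙ : Measure Ω)] (hl : 0 < l) (hd : d ≠ 0)
    (hXm : ∀ i, Measurable (X i)) (hindep : iIndepFun X ℙ)
    (hdist : ∀ i, Measure.map (X i) ℙ = Measure.pi fun _ : Fin d => expMeasure l)
    {y : ℕ → ℝ} (hy : ∀ n, 0 ≤ y n) (hy1 : ∀ᶠ n in atTop, y n ≤ 1) {K : ℝ}
    (hyK : ∀ᶠ n : ℕ in atTop, y n ^ d ≤ K * (log n / n)) :
    ∀ᶠ n : ℕ in atTop,
      ℙ {ω | ∃ i < n, X i ω ∈ cornerBox l d (2 * (log n / n)) ∧ 2 ≤ rggDeg X (y n) n i ω}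
        ≤ ENNReal.ofReal (8 * ((2 * l * exp l) ^ d * K) ^ 2 * (log n ^ 5 / n ^ 2)) := by
  filter_upwards [eventually_two_mul_log_div_self_mem_Ioc, hy1, hyK, eventually_gt_atTop 0]
    with n ⟨hp0, hp1⟩ hny1 hnyK hn
  have hny0 := hy n
  refine (measure_exists_mem_cornerBox_two_le_rggDeg_le hl hd hXm hindep hdist hp0 hp1
    hny0 n).trans (ENNReal.ofReal_le_ofReal ?_)
  have hball : (2 * l * y n * exp (l * y n)) ^ d ≤ (2 * l * exp l) ^ d * K * (log n / n) :=
    calc (2 * l * y n * exp (l * y n)) ^ d = (2 * l * exp (l * y n)) ^ d * y n ^ d := by ring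
      _ ≤ (2 * l * exp l) ^ d * (K * (log n / n)) := by
          have := exp_le_exp.2 (mul_le_of_le_one_right hl.le hny1)
          gcongr
      _ = (2 * l * exp l) ^ d * K * (log n / n) := by ring
  have hnp : n * (2 * (log n / n)) = 2 * log n := by field_simp
  calc (n * (2 * (log n / n))) ^ 3 * ((2 * l * y n * exp (l * y n)) ^ d) ^ 2
      ≤ (2 * log n) ^ 3 * ((2 * l * exp l) ^ d * K * (log n / n)) ^ 2 := by
        rw [hnp]
        gcongr
    _ = 8 * ((2 * l * exp l) ^ d * K) ^ 2 * (log n ^ 5 / n ^ 2) := by ring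

end CornerBox

theorem ae_eventually_rggMinDeg_le_one {d : ℕ} (hd : d ≠ 0) {l : ℝ} (hl : 0 < l)
    {Ω : Type*} [MeasureSpace Ω] [IsProbabilityMeasure (ℙ : Measure Ω)]
    {X : ℕ → Ω → Fin d → ℝ} (hXm : ∀ i, Measurable (X i)) (hindep : iIndepFun X ℙ)
    (hdist : ∀ i, Measure.map (X i) ℙ = Measure.pi fun _ : Fin d => expMeasure l)
    {y : ℕ → ℝ} (hy : ∀ n, 0 ≤ y n) {K : ℝ}
    (hyK : ∀ᶠ n : ℕ in atTop, y n ^ d ≤ K * (log n / n)) :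
    ∀ᵐ ω ∂ℙ, ∀ᶠ n in atTop, rggMinDeg X (y n) n ω ≤ 1 := by
  have hy1 : ∀ᶠ n in atTop, y n ≤ 1 := by
    have hK : Tendsto (fun n : ℕ => K * (log n / n)) atTop (𝓝 0) := by
      simpa using tendsto_log_div_self_nat.const_mul K
    filter_upwards [hyK, hK.eventually (eventually_le_nhds one_pos)] with n hn hn1
    exact (pow_le_one_iff_of_nonneg (hy n) hd).mp (hn.trans hn1)
  have hempty := ae_eventually_notMem_of_le_summable (fun n => rpow_nonneg n.cast_nonneg (-2))
    (summable_nat_rpow.mpr (by norm_num))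
    (eventually_measure_forall_notMem_cornerBox_le hl hd hXm hindep hdist)
  have hcrowd := ae_eventually_notMem_of_le_summable (fun n => by positivity)
    ((summable_log_pow_div_sq 5).mul_left _)
    (eventually_measure_exists_mem_cornerBox_two_le_rggDeg_le hl hd hXm hindep hdist hy hy1 hyK)
  filter_upwards [hempty, hcrowd] with ω hω₁ hω₂
  filter_upwards [hω₁, hω₂] with n hn₁ hn₂
  simp only [not_forall, not_not, not_exists, not_and, not_le] at hn₁ hn₂
  obtain ⟨i, hin, hiT⟩ := hn₁
  exact (rggMinDeg_le_rggDeg hin).trans (Nat.le_of_lt_succ (hn₂ i hin hiT))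

/-- **Minimum vertex degree, upper bound.** In the connectivity regime
`n·y_n^d/log n → c ∈ (0,∞)`, almost surely `limsup δ_n(y_n)/(n·y_n^d) ≤ λ^d`. -/
theorem min_degree_limsup_le
    {d : ℕ} (hd : 1 ≤ d) (l : ℝ) (hl : 0 < l)
    {Ω : Type*} [MeasureSpace Ω] [IsProbabilityMeasure (ℙ : Measure Ω)]
    (X : ℕ → Ω → (Fin d → ℝ)) (hXm : ∀ i, Measurable (X i))
    (hindep : iIndepFun X ℙ)
    (hdist : ∀ i, Measure.map (X i) ℙ = Measure.pi fun _ : Fin d => expMeasure l)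
    (y : ℕ → ℝ) (hy : ∀ n, 0 < y n) (c : ℝ) (hc : 0 < c)
    (hreg : Tendsto (fun n : ℕ => (n : ℝ) * y n ^ d / Real.log n) atTop (nhds c)) :
    ∀ᵐ ω ∂ℙ,
      limsup (fun n : ℕ => (rggMinDeg X (y n) n ω : ℝ) / ((n : ℝ) * y n ^ d)) atTop
        ≤ l ^ d := by
  have hlog := tendsto_log_natCast_atTop.eventually_gt_atTop 0
  have hyK : ∀ᶠ n : ℕ in atTop, y n ^ d ≤ 2 * c * (log n / n) := by
    filter_upwards [hreg.eventually (eventually_le_nhds (by linarith : c < 2 * c)), hlog,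
      eventually_gt_atTop 0] with n hn hlogn hn0
    rw [div_le_iff₀ hlogn] at hn
    rw [mul_div_assoc', le_div_iff₀ (by positivity)]
    linarith
  have hvol : Tendsto (fun n : ℕ => (n : ℝ) * y n ^ d) atTop atTop := by
    refine (hreg.pos_mul_atTop hc tendsto_log_natCast_atTop).congr' ?_
    filter_upwards [hlog] with n hn
    exact div_mul_cancel₀ _ hn.ne'
  filter_upwards [ae_eventually_rggMinDeg_le_one (by omega) hl hXm hindep hdist
    (fun n => (hy n).le) hyK] with ω hω
  have hlim : Tendsto (fun n : ℕ => (rggMinDeg X (y n) n ω : ℝ) / ((n : ℝ) * y n ^ d)) atTop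
      (𝓝 0) := by
    refine squeeze_zero' (.of_forall fun n => by have := hy n; positivity) ?_
      (tendsto_inv_atTop_zero.comp hvol)
    filter_upwards [hω] with n hn
    rw [div_eq_mul_inv]
    exact mul_le_of_le_one_left (by have := hy n; positivity) (by exact_mod_cast hn)
  rw [hlim.limsup_eq]
  positivity
end

section
/- Let d ≥ 1, λ > 0, and let X_1, X_2, … be i.i.d. random vectors in ℝ^d whose coordinates are independent and each exponentially distributed with rate λ. Let {y_n} be a nonincreasing sequence of positive edge distances with Σ_n n·y_n^d < ∞. Let Δ_n(y_n) be the maximum vertex degree of the random geometric graph G_n(y_n). Then P[Δ_n(y_n) ≥ 1 infinitely often] = 0; that is, almost surely G_n(y_n) has no edges for all sufficiently large n. -/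
open MeasureTheory ProbabilityTheory Real Filter

open scoped ENNReal

/-!
Group the indices into dyadic blocks `2^k ≤ n < 2^(k+1)`. Since `y` is nonincreasing, an edge of
some `G_n(y_n)` in block `k` is an edge of `G_{2^(k+1)}(y_{2^k})`, and a union bound over pairs,
with the exponential density bounded by `λ`, gives this event probability at most
`4^(k+1) (2λ y_{2^k})^d`. Monotonicity of `y` makes `Σ 4^k y_{2^k}^d` comparable to
`Σ n y_n^d < ∞`, so Borel–Cantelli applies to the blocks.
-/

theorem expMeasure_le_smul_volume {l : ℝ} (hl : 0 ≤ l) :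
    expMeasure l ≤ ENNReal.ofReal l • volume := by
  rw [← withDensity_const]
  refine withDensity_mono (Eventually.of_forall fun x => ?_)
  change exponentialPDF l x ≤ ENNReal.ofReal l
  rw [exponentialPDF_eq]
  refine ENNReal.ofReal_le_ofReal ?_
  split_ifs with hx
  · exact mul_le_of_le_one_right hl (exp_le_one_iff.mpr (by nlinarith))
  · exact hl

theorem expMeasure_pi_closedBall_le {ι : Type*} [Fintype ι] {l : ℝ} (hl : 0 < l)
    (a : ι → ℝ) {r : ℝ} (hr : 0 ≤ r) :
    Measure.pi (fun _ : ι => expMeasure l) (Metric.closedBall a r)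
      ≤ ENNReal.ofReal ((2 * l * r) ^ Fintype.card ι) := by
  have := isProbabilityMeasure_expMeasure hl
  rw [closedBall_pi a hr, Measure.pi_pi, ENNReal.ofReal_pow (by positivity),
    ← Finset.card_univ, ← Finset.prod_const]
  refine Finset.prod_le_prod' fun i _ => ?_
  calc expMeasure l (Metric.closedBall (a i) r)
      ≤ ENNReal.ofReal l * volume (Metric.closedBall (a i) r) :=
        expMeasure_le_smul_volume hl.le _
    _ = ENNReal.ofReal (2 * l * r) := by
        rw [Real.volume_closedBall, ← ENNReal.ofReal_mul hl.le]; ring_nf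

theorem measure_dist_le_le_of_indepFun {Ω E : Type*} [MeasurableSpace Ω] {μ : Measure Ω}
    [IsProbabilityMeasure μ] [PseudoMetricSpace E] [MeasurableSpace E] [OpensMeasurableSpace E]
    [SecondCountableTopology E] {X Y : Ω → E} (hX : Measurable X) (hY : Measurable Y)
    (hXY : IndepFun X Y μ) {r : ℝ} {c : ℝ≥0∞}
    (hc : ∀ a, μ.map Y (Metric.closedBall a r) ≤ c) :
    μ {ω | dist (X ω) (Y ω) ≤ r} ≤ c := by
  have hS : MeasurableSet {p : E × E | dist p.1 p.2 ≤ r} :=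
    measurableSet_le (measurable_fst.dist measurable_snd) measurable_const
  have := Measure.isProbabilityMeasure_map (μ := μ) hX.aemeasurable
  change μ ((fun ω => (X ω, Y ω)) ⁻¹' {p : E × E | dist p.1 p.2 ≤ r}) ≤ c
  rw [← Measure.map_apply (hX.prodMk hY) hS,
    (indepFun_iff_map_prod_eq_prod_map_map hX.aemeasurable hY.aemeasurable).1 hXY,
    Measure.prod_apply hS]
  calc ∫⁻ a, μ.map Y (Prod.mk a ⁻¹' {p : E × E | dist p.1 p.2 ≤ r}) ∂μ.map X
      ≤ ∫⁻ _, c ∂μ.map X := lintegral_mono fun a => by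
        convert hc a using 2
        ext b
        exact Metric.mem_closedBall'.symm
    _ = c := by simp

theorem summable_four_pow_mul_of_summable_nat_mul {f : ℕ → ℝ} (hf : Antitone f) (hf0 : 0 ≤ f)
    (h : Summable fun n : ℕ => (n : ℝ) * f n) :
    Summable fun k : ℕ => (4 : ℝ) ^ k * f (2 ^ k) := by
  have hblock : ∀ k : ℕ, (4 : ℝ) ^ k * f (2 ^ (k + 1))
      ≤ ∑ n ∈ Finset.Ico (2 ^ k : ℕ) (2 ^ (k + 1)), (n : ℝ) * f n := by
    intro k
    have hterm : ∀ n ∈ Finset.Ico (2 ^ k) (2 ^ (k + 1)),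
        (2 : ℝ) ^ k * f (2 ^ (k + 1)) ≤ n * f n := fun n hn => by
      obtain ⟨hkn, hnk⟩ := Finset.mem_Ico.mp hn
      exact mul_le_mul (by exact_mod_cast hkn) (hf hnk.le) (hf0 _) n.cast_nonneg
    have hcard : (Finset.Ico (2 ^ k) (2 ^ (k + 1))).card = 2 ^ k := by
      rw [Nat.card_Ico, pow_succ]; omega
    calc (4 : ℝ) ^ k * f (2 ^ (k + 1))
        = (Finset.Ico (2 ^ k) (2 ^ (k + 1))).card • ((2 : ℝ) ^ k * f (2 ^ (k + 1))) := by
          rw [hcard, nsmul_eq_mul, show (4 : ℝ) = 2 * 2 by norm_num, mul_pow]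
          push_cast
          ring
      _ ≤ _ := Finset.card_nsmul_le_sum _ _ _ hterm
  have hblocks : ∀ K : ℕ, ∑ k ∈ Finset.range K, ∑ n ∈ Finset.Ico (2 ^ k : ℕ) (2 ^ (k + 1)),
      (n : ℝ) * f n = ∑ n ∈ Finset.Ico (1 : ℕ) (2 ^ K), (n : ℝ) * f n := by
    intro K
    induction K with
    | zero => simp
    | succ K ih =>
      rw [Finset.sum_range_succ, ih, Finset.sum_Ico_consecutive _ Nat.one_le_two_pow
        (Nat.pow_le_pow_right two_pos K.le_succ)]
  have hshift : Summable fun k : ℕ => (4 : ℝ) ^ k * f (2 ^ (k + 1)) := by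
    refine summable_of_sum_range_le (c := ∑' n : ℕ, n * f n)
      (fun k => mul_nonneg (by positivity) (hf0 _))
      fun K => (Finset.sum_le_sum fun k _ => hblock k).trans ?_
    rw [hblocks]
    exact h.sum_le_tsum _ fun n _ => mul_nonneg n.cast_nonneg (hf0 n)
  rw [← summable_nat_add_iff 1]
  simpa only [pow_succ, mul_assoc, mul_comm _ (4 : ℝ)] using hshift.mul_left 4

def rggHasEdge {d : ℕ} {Ω : Type*} (X : ℕ → Ω → (Fin d → ℝ)) (r : ℝ) (m : ℕ) : Set Ω :=
  {ω | ∃ i < m, ∃ j < m, i ≠ j ∧ ‖X i ω - X j ω‖ ≤ r}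

section rggHasEdge

variable {d : ℕ} {Ω : Type*} (X : ℕ → Ω → (Fin d → ℝ))

theorem rggHasEdge_mono {r r' : ℝ} {m m' : ℕ} (hr : r ≤ r') (hm : m ≤ m') :
    rggHasEdge X r m ⊆ rggHasEdge X r' m' := by
  rintro ω ⟨i, hi, j, hj, hij, hdist⟩
  exact ⟨i, hi.trans_le hm, j, hj.trans_le hm, hij, hdist.trans hr⟩

theorem mem_rggHasEdge_of_one_le_rggMaxDeg {r : ℝ} {n : ℕ} {ω : Ω}
    (h : 1 ≤ rggMaxDeg X r n ω) : ω ∈ rggHasEdge X r n := by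
  have hne : ((fun i => rggDeg X r n i ω) '' Set.Iio n).Nonempty := by
    by_contra hempty
    rw [Set.not_nonempty_iff_eq_empty] at hempty
    rw [rggMaxDeg, hempty, csSup_empty] at h
    exact absurd h (by decide)
  obtain ⟨i, hi, hmax⟩ := Nat.sSup_mem hne ((Set.finite_Iio n).image _).bddAbove
  have hdeg : 0 < rggDeg X r n i ω := by rwa [rggMaxDeg, ← hmax] at h
  obtain ⟨⟨j, hj, hji, hdist⟩⟩ := (Nat.card_pos_iff.mp hdeg).1
  exact ⟨i, hi, j, hj, hji.symm, hdist⟩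

theorem setOf_frequently_one_le_rggMaxDeg_subset {y : ℕ → ℝ} (hy : Antitone y) :
    {ω | ∀ N : ℕ, ∃ n ≥ N, 1 ≤ rggMaxDeg X (y n) n ω}
      ⊆ {ω | ∃ᶠ k in atTop, ω ∈ rggHasEdge X (y (2 ^ k)) (2 ^ (k + 1))} := by
  intro ω hω
  refine frequently_atTop.mpr fun K => ?_
  obtain ⟨n, hn, hdeg⟩ := hω (2 ^ K)
  have hn0 : n ≠ 0 := Nat.one_le_iff_ne_zero.mp (Nat.one_le_two_pow.trans hn)
  refine ⟨Nat.log 2 n, (Nat.le_log_iff_pow_le one_lt_two hn0).mpr hn, ?_⟩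
  exact rggHasEdge_mono X (hy (Nat.pow_log_le_self 2 hn0))
    (Nat.lt_pow_succ_log_self one_lt_two n).le (mem_rggHasEdge_of_one_le_rggMaxDeg X hdeg)

theorem measure_rggHasEdge_le [MeasurableSpace Ω] {μ : Measure Ω} [IsProbabilityMeasure μ]
    {l : ℝ} (hl : 0 < l) (hXm : ∀ i, Measurable (X i)) (hindep : iIndepFun X μ)
    (hdist : ∀ i, μ.map (X i) = Measure.pi fun _ : Fin d => expMeasure l)
    {r : ℝ} (hr : 0 ≤ r) (m : ℕ) :
    μ (rggHasEdge X r m) ≤ ENNReal.ofReal (m ^ 2 * (2 * l * r) ^ d) := by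
  have hpair : ∀ i j,
      μ {ω | i ≠ j ∧ ‖X i ω - X j ω‖ ≤ r} ≤ ENNReal.ofReal ((2 * l * r) ^ d) := by
    intro i j
    rcases eq_or_ne i j with rfl | hij
    · simp
    calc μ {ω | i ≠ j ∧ ‖X i ω - X j ω‖ ≤ r}
        ≤ μ {ω | dist (X i ω) (X j ω) ≤ r} :=
          measure_mono fun ω hω => (dist_eq_norm (X i ω) (X j ω)).trans_le hω.2
      _ ≤ _ := measure_dist_le_le_of_indepFun (hXm i) (hXm j) (hindep.indepFun hij)
          fun a => by
            simpa only [hdist j, Fintype.card_fin] using expMeasure_pi_closedBall_le hl a hr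
  have hunion : rggHasEdge X r m ⊆ ⋃ i ∈ Finset.range m, ⋃ j ∈ Finset.range m,
      {ω | i ≠ j ∧ ‖X i ω - X j ω‖ ≤ r} := by
    rintro ω ⟨i, hi, j, hj, hij, hdist⟩
    simp only [Set.mem_iUnion, Finset.mem_range]
    exact ⟨i, hi, j, hj, hij, hdist⟩
  calc μ (rggHasEdge X r m)
      ≤ ∑ i ∈ Finset.range m, ∑ j ∈ Finset.range m, μ {ω | i ≠ j ∧ ‖X i ω - X j ω‖ ≤ r} :=
        (measure_mono hunion).trans <| (measure_biUnion_finset_le _ _).trans <|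
          Finset.sum_le_sum fun i _ => measure_biUnion_finset_le _ _
    _ ≤ ∑ _i ∈ Finset.range m, ∑ _j ∈ Finset.range m, ENNReal.ofReal ((2 * l * r) ^ d) :=
        Finset.sum_le_sum fun i _ => Finset.sum_le_sum fun j _ => hpair i j
    _ = ENNReal.ofReal (m ^ 2 * (2 * l * r) ^ d) := by
        rw [ENNReal.ofReal_mul (by positivity), ENNReal.ofReal_pow m.cast_nonneg,
          ENNReal.ofReal_natCast]
        simp only [Finset.sum_const, Finset.card_range, nsmul_eq_mul, sq, mul_assoc]

end rggHasEdge

theorem max_degree_io_zero_general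
    {d : ℕ} (l : ℝ) (hl : 0 < l)
    {Ω : Type*} [MeasureSpace Ω] [IsProbabilityMeasure (ℙ : Measure Ω)]
    (X : ℕ → Ω → (Fin d → ℝ)) (hXm : ∀ i, Measurable (X i))
    (hindep : iIndepFun X ℙ)
    (hdist : ∀ i, Measure.map (X i) ℙ = Measure.pi fun _ : Fin d => expMeasure l)
    (y : ℕ → ℝ) (hy : ∀ n, 0 < y n) (hmono : Antitone y)
    (hsum : Summable (fun n : ℕ => (n : ℝ) * y n ^ d)) :
    ℙ {ω | ∀ N : ℕ, ∃ n ≥ N, 1 ≤ rggMaxDeg X (y n) n ω} = 0 := by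
  have hbound : ∀ k : ℕ, ℙ (rggHasEdge X (y (2 ^ k)) (2 ^ (k + 1)))
      ≤ ENNReal.ofReal (4 * (2 * l) ^ d * (4 ^ k * y (2 ^ k) ^ d)) := fun k => by
    convert measure_rggHasEdge_le X hl hXm hindep hdist (hy _).le (2 ^ (k + 1)) using 2
    rw [show (4 : ℝ) ^ k = (2 ^ k) ^ 2 by rw [← pow_mul, mul_comm, pow_mul]; norm_num]
    push_cast
    ring
  have hsummable : Summable fun k : ℕ => 4 * (2 * l) ^ d * (4 ^ k * y (2 ^ k) ^ d) :=
    (summable_four_pow_mul_of_summable_nat_mul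
      (fun m n hmn => pow_le_pow_left₀ (hy n).le (hmono hmn) d)
      (fun n => pow_nonneg (hy n).le d) hsum).mul_left _
  exact measure_mono_null (setOf_frequently_one_le_rggMaxDeg_subset X hmono)
    (measure_setOfPred_frequently_eq_zero
      (ne_top_of_le_ne_top hsummable.tsum_ofReal_ne_top (ENNReal.tsum_le_tsum hbound)))

/-- If `{y_n}` is nonincreasing and `Σ_n n·y_n^d < ∞`, then `P[Δ_n(y_n) ≥ 1 i.o.] = 0`:
almost surely the graphs `G_n(y_n)` eventually have no edges. -/
theorem max_degree_io_zero
    {d : ℕ} (hd : 1 ≤ d) (l : ℝ) (hl : 0 < l)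
    {Ω : Type*} [MeasureSpace Ω] [IsProbabilityMeasure (ℙ : Measure Ω)]
    (X : ℕ → Ω → (Fin d → ℝ)) (hXm : ∀ i, Measurable (X i))
    (hindep : iIndepFun X ℙ)
    (hdist : ∀ i, Measure.map (X i) ℙ = Measure.pi fun _ : Fin d => expMeasure l)
    (y : ℕ → ℝ) (hy : ∀ n, 0 < y n) (hmono : Antitone y)
    (hsum : Summable (fun n : ℕ => (n : ℝ) * y n ^ d)) :
    ℙ {ω | ∀ N : ℕ, ∃ n ≥ N, 1 ≤ rggMaxDeg X (y n) n ω} = 0 :=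
  max_degree_io_zero_general l hl X hXm hindep hdist y hy hmono hsum
end
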